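/- arXiv:1302.5669 — 2 statements merged into one kernel-verified Lean document; each statement's English description precedes it below -/
import Mathlib

section
/- Let q be a prime power, m ≥ 1, and let β = (b_1,…,b_m) be a basis of F_{q^m} over F_q with dual basis β^⊥ = (b_1^*,…,b_m^*) with respect to the trace form. Then for every F_{q^m}-linear code C ⊆ F_{q^m}^n, the Euclidean dual of the q-ary expansion of C with respect to β equals the q-ary expansion of the Euclidean dual code C^⊥ with respect to β^⊥, i.e. [β(C)]^⊥ = β^⊥(C^⊥). -/
open Finset

/-- Euclidean dual of a linear code. -/
def dualCode {F : Type*} [CommRing F] {ι : Type*} [Fintype ι]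
    (C : Submodule F (ι → F)) : Submodule F (ι → F) where
  carrier := {y | ∀ x ∈ C, ∑ i, y i * x i = 0}
  add_mem' := by
    intro a b ha hb x hx
    simp only [Set.mem_setOf_eq] at *
    simp only [Pi.add_apply, add_mul, Finset.sum_add_distrib, ha x hx, hb x hx, add_zero]
  zero_mem' := by intro x hx; simp
  smul_mem' := by
    intro c a ha x hx
    simp only [Set.mem_setOf_eq] at *
    simp only [Pi.smul_apply, smul_eq_mul, mul_assoc, ← Finset.mul_sum, ha x hx, mul_zero]

/-- The `q`-ary expansion map with respect to a basis. -/
noncomputable def expandMap {K L : Type*} [Field K] [Field L] [Algebra K L]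
    {m : ℕ} (b : Module.Basis (Fin m) K L) (ι : Type*) :
    (ι → L) →ₗ[K] (ι × Fin m → K) where
  toFun c := fun p => b.repr (c p.1) p.2
  map_add' x y := by funext p; simp
  map_smul' r x := by funext p; simp

/-- The `q`-ary expansion of a code with respect to a basis. -/
noncomputable def expandCode {K L : Type*} [Field K] [Field L] [Algebra K L]
    {m : ℕ} (b : Module.Basis (Fin m) K L) {ι : Type*} (C : Submodule L (ι → L)) :
    Submodule K (ι × Fin m → K) :=
  Submodule.map (expandMap b ι) (C.restrictScalars K)

section TraceDual

variable {K L κ : Type*} [Field K] [Field L] [Algebra K L] [Fintype κ] [DecidableEq κ]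
  {b bd : Module.Basis κ K L}

theorem trace_mul_dual_eq_repr
    (hdual : ∀ i j, Algebra.trace K L (b i * bd j) = if i = j then 1 else 0)
    (x : L) (j : κ) : Algebra.trace K L (x * bd j) = b.repr x j := by
  conv_lhs => rw [← b.sum_repr x]
  simp only [sum_mul, map_sum, smul_mul_assoc, map_smul, hdual, smul_eq_mul, mul_ite, mul_one,
    mul_zero, sum_ite_eq', mem_univ, if_true]

theorem trace_mul_eq_sum_repr_mul_repr
    (hdual : ∀ i j, Algebra.trace K L (b i * bd j) = if i = j then 1 else 0)
    (x y : L) : Algebra.trace K L (x * y) = ∑ j, bd.repr x j * b.repr y j := by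
  conv_lhs => rw [← bd.sum_repr x]
  simp only [sum_mul, map_sum, smul_mul_assoc, map_smul, smul_eq_mul, mul_comm (bd _) y,
    trace_mul_dual_eq_repr hdual]

theorem eq_zero_of_forall_trace_mul_eq_zero
    (hdual : ∀ i j, Algebra.trace K L (b i * bd j) = if i = j then 1 else 0)
    {s : L} (hs : ∀ a, Algebra.trace K L (a * s) = 0) : s = 0 := by
  refine b.repr.map_eq_zero_iff.mp (Finsupp.ext fun j => ?_)
  rw [← trace_mul_dual_eq_repr hdual, mul_comm, hs, Finsupp.zero_apply]

end TraceDual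

section Expansion

variable {K L ι : Type*} [Field K] [Field L] [Algebra K L] {m : ℕ}

theorem expandMap_surjective (b : Module.Basis (Fin m) K L) :
    Function.Surjective (expandMap b ι) := fun y =>
  ⟨fun i => b.repr.symm (Finsupp.equivFunOnFinite.symm fun j => y (i, j)),
    by funext p; simp [expandMap]⟩

theorem sum_expandMap_mul_expandMap [Fintype ι] {b bd : Module.Basis (Fin m) K L}
    (hdual : ∀ i j, Algebra.trace K L (b i * bd j) = if i = j then 1 else 0)
    (z c : ι → L) :
    ∑ p, expandMap bd ι z p * expandMap b ι c p = Algebra.trace K L (∑ i, z i * c i) := by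
  simp [expandMap, Fintype.sum_prod_type, trace_mul_eq_sum_repr_mul_repr hdual]

end Expansion

theorem dual_of_expansion_general
    {K L : Type*} [Field K] [Field L] [Algebra K L]
    {m : ℕ} (b bd : Module.Basis (Fin m) K L)
    (hdual : ∀ i j, Algebra.trace K L (b i * bd j) = if i = j then 1 else 0)
    {n : ℕ} (C : Submodule L (Fin n → L)) :
    dualCode (expandCode b C) = expandCode bd (dualCode C) := by
  refine le_antisymm (fun y hy => ?_) ?_
  · obtain ⟨z, rfl⟩ := expandMap_surjective bd y
    -- `C` is `L`-linear, so testing `y` against the expansions of all `a • c` sees every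
    -- trace `tr (a * ∑ i, z i * c i)`, and the trace form is nondegenerate.
    refine ⟨z, fun c hc => eq_zero_of_forall_trace_mul_eq_zero hdual fun a => ?_, rfl⟩
    have h := hy _ ⟨a • c, C.smul_mem a hc, rfl⟩
    rw [sum_expandMap_mul_expandMap hdual] at h
    simpa [mul_sum, mul_left_comm] using h
  · rintro _ ⟨z, hz, rfl⟩ _ ⟨c, hc, rfl⟩
    rw [sum_expandMap_mul_expandMap hdual, hz c hc, map_zero]

/-- For a basis `b` of `F_{q^m}` over `F_q` with trace-dual basis `bd`,
the Euclidean dual of the `q`-ary expansion of a linear code `C` with respect to `b`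
equals the `q`-ary expansion of the Euclidean dual `C^⊥` with respect to `bd`. -/
theorem dual_of_expansion
    {K L : Type*} [Field K] [Field L] [Algebra K L] [Fintype K] [Fintype L]
    {m : ℕ} (b bd : Module.Basis (Fin m) K L)
    (hdual : ∀ i j, Algebra.trace K L (b i * bd j) = if i = j then 1 else 0)
    {n : ℕ} (C : Submodule L (Fin n → L)) :
    dualCode (expandCode b C) = expandCode bd (dualCode C) :=
  dual_of_expansion_general b bd hdual C
end

section
/- (Classical content of the (u|u+v) theorem for asymmetric quantum codes.) Let C_2 ⊆ C_1 ⊆ F_q^n and C_4 ⊆ C_3 ⊆ F_q^n be linear codes of dimensions k_2 ≤ k_1 and k_4 ≤ k_3, with d_1 = d(C_1), d_3 = d(C_3), d_2^⊥ = d(C_2^⊥) and d_4^⊥ = d(C_4^⊥). Then: (i) (C_2|C_2+C_4) ⊆ (C_1|C_1+C_3); (ii) dim (C_1|C_1+C_3) − dim (C_2|C_2+C_4) = (k_1 + k_3) − (k_2 + k_4); (iii) every nonzero codeword of (C_1|C_1+C_3) has Hamming weight at least min{2d_1, d_3}; and (iv) every nonzero codeword of [(C_2|C_2+C_4)]^⊥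 has Hamming weight at least min{2d_4^⊥, d_2^⊥}. -/
open Finset

/-- Minimum distance (minimum weight of a nonzero codeword). -/
noncomputable def minDist {F : Type*} [Field F] [DecidableEq F] {ι : Type*} [Fintype ι]
    (C : Submodule F (ι → F)) : ℕ :=
  sInf {w | ∃ c ∈ C, c ≠ 0 ∧ hammingNorm c = w}

/-- The `(u|u+v)` construction applied to two codes of the same length. -/
def uuvCode {F : Type*} [Field F] {n : ℕ} (C D : Submodule F (Fin n → F)) :
    Submodule F (Fin n ⊕ Fin n → F) where
  carrier := {x | ∃ u ∈ C, ∃ v ∈ D, x = Sum.elim u (u + v)}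
  zero_mem' := ⟨0, C.zero_mem, 0, D.zero_mem, by funext j; cases j <;> simp⟩
  add_mem' := by
    rintro a b ⟨u₁, hu₁, v₁, hv₁, rfl⟩ ⟨u₂, hu₂, v₂, hv₂, rfl⟩
    refine ⟨u₁ + u₂, C.add_mem hu₁ hu₂, v₁ + v₂, D.add_mem hv₁ hv₂, ?_⟩
    funext j; cases j <;> simp <;> ring
  smul_mem' := by
    rintro c a ⟨u, hu, v, hv, rfl⟩
    refine ⟨c • u, C.smul_mem c hu, c • v, D.smul_mem c hv, ?_⟩
    funext j; cases j <;> simp [mul_add]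

section Hamming

variable {γ : Type*} [Zero γ] [DecidableEq γ] {ι κ : Type*} [Fintype ι] [Fintype κ]

lemma hammingNorm_sum_elim (a : ι → γ) (b : κ → γ) :
    hammingNorm (Sum.elim a b) = hammingNorm a + hammingNorm b := by
  simp only [hammingNorm, Finset.card_filter, Fintype.sum_sum_type, Sum.elim_inl, Sum.elim_inr]
  rfl

variable {G : Type*} [AddGroup G] [DecidableEq G]

lemma hammingNorm_neg (a : ι → G) : hammingNorm (-a) = hammingNorm a :=
  hammingNorm_comp (fun _ => Neg.neg) (fun _ => neg_injective) fun _ => neg_zero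

lemma hammingNorm_le_add_hammingNorm_add (t s : ι → G) :
    hammingNorm s ≤ hammingNorm t + hammingNorm (t + s) := by
  have := hammingDist_triangle t 0 (t + s)
  rwa [hammingDist_eq_hammingNorm, neg_add_cancel_left, hammingDist_zero_right,
    hammingDist_zero_left] at this

end Hamming

section Codes

variable {F : Type*} [Field F] [DecidableEq F] {ι : Type*} [Fintype ι]

lemma minDist_le_hammingNorm {C : Submodule F (ι → F)} {c : ι → F} (hc : c ∈ C) (hne : c ≠ 0) :
    minDist C ≤ hammingNorm c :=
  Nat.sInf_le ⟨c, hc, hne, rfl⟩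

/-- The weight estimate behind both distance bounds: if `s = 0` the pair `(t, t)` has weight
`2 wt t`, and otherwise the triangle inequality gives `wt s ≤ wt t + wt (t + s)`. -/
lemma min_le_hammingNorm_add_hammingNorm_add {T S : Submodule F (ι → F)} {t s : ι → F}
    (ht : t ∈ T) (hs : s ∈ S) (hts : t ≠ 0 ∨ s ≠ 0) :
    min (2 * minDist T) (minDist S) ≤ hammingNorm t + hammingNorm (t + s) := by
  by_cases hs0 : s = 0
  · subst hs0
    have := minDist_le_hammingNorm ht (hts.resolve_right (not_not.2 rfl))
    rw [add_zero]
    omega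
  · exact (min_le_right _ _).trans <|
      (minDist_le_hammingNorm hs hs0).trans (hammingNorm_le_add_hammingNorm_add t s)

end Codes

section UUV

variable {F : Type*} [Field F] {n : ℕ}

lemma uuvCode_mono {C C' D D' : Submodule F (Fin n → F)} (hC : C ≤ C') (hD : D ≤ D') :
    uuvCode C D ≤ uuvCode C' D' := by
  rintro x ⟨u, hu, v, hv, rfl⟩
  exact ⟨u, hC hu, v, hD hv, rfl⟩

def uuvMap (C D : Submodule F (Fin n → F)) : C × D →ₗ[F] (Fin n ⊕ Fin n → F) where
  toFun p := Sum.elim (p.1 : Fin n → F) (p.1 + p.2 : Fin n → F)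
  map_add' p q := by
    funext j
    cases j <;> simp [add_add_add_comm]
  map_smul' c p := by
    funext j
    cases j <;> simp [mul_add]

lemma uuvMap_injective (C D : Submodule F (Fin n → F)) : Function.Injective (uuvMap C D) := by
  rintro ⟨u₁, v₁⟩ ⟨u₂, v₂⟩ h
  have hu : (u₁ : Fin n → F) = u₂ := funext fun i => congrFun h (Sum.inl i)
  have huv : (u₁ + v₁ : Fin n → F) = u₂ + v₂ := funext fun i => congrFun h (Sum.inr i)
  rw [hu] at huv
  ext : 2
  exacts [hu, add_left_cancel huv]

lemma range_uuvMap (C D : Submodule F (Fin n → F)) :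
    LinearMap.range (uuvMap C D) = uuvCode C D := by
  ext x
  constructor
  · rintro ⟨⟨u, v⟩, rfl⟩
    exact ⟨u, u.2, v, v.2, rfl⟩
  · rintro ⟨u, hu, v, hv, rfl⟩
    exact ⟨(⟨u, hu⟩, ⟨v, hv⟩), rfl⟩

lemma finrank_uuvCode (C D : Submodule F (Fin n → F)) :
    Module.finrank F (uuvCode C D) = Module.finrank F C + Module.finrank F D := by
  rw [← range_uuvMap, LinearMap.finrank_range_of_inj (uuvMap_injective C D),
    Module.finrank_prod]

/-- A word `(a | b)` of the dual of `(C | C + D)` has `b ∈ D^⊥` and `a + b ∈ C^⊥`; with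
`t = -b` and `s = a + b` it is again of the shape `(t + s | -t)`. -/
lemma exists_eq_of_mem_dualCode_uuvCode {C D : Submodule F (Fin n → F)}
    {y : Fin n ⊕ Fin n → F} (hy : y ∈ dualCode (uuvCode C D)) :
    ∃ t ∈ dualCode D, ∃ s ∈ dualCode C, y = Sum.elim (t + s) (-t) := by
  set a : Fin n → F := fun i => y (Sum.inl i)
  set b : Fin n → F := fun i => y (Sum.inr i)
  have orth : ∀ u ∈ C, ∀ v ∈ D, ∑ i, a i * u i + ∑ i, b i * (u i + v i) = 0 := by
    intro u hu v hv
    simpa only [Fintype.sum_sum_type, Sum.elim_inl, Sum.elim_inr, Pi.add_apply]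
      using hy _ ⟨u, hu, v, hv, rfl⟩
  have hb : b ∈ dualCode D := fun v hv => by
    simpa using orth 0 C.zero_mem v hv
  have hab : a + b ∈ dualCode C := fun u hu => by
    simpa [add_mul, Finset.sum_add_distrib] using orth u hu 0 D.zero_mem
  refine ⟨-b, (dualCode D).neg_mem hb, a + b, hab, ?_⟩
  funext j
  cases j <;> simp [a, b]

end UUV

theorem uuv_CSS_data_general {F : Type*} [Field F] [DecidableEq F] {n : ℕ}
    (C₁ C₂ C₃ C₄ : Submodule F (Fin n → F)) (h12 : C₂ ≤ C₁) (h34 : C₄ ≤ C₃)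
    (k₁ k₂ k₃ k₄ d₁ d₃ d₂' d₄' : ℕ)
    (hk₁ : Module.finrank F C₁ = k₁) (hk₂ : Module.finrank F C₂ = k₂)
    (hk₃ : Module.finrank F C₃ = k₃) (hk₄ : Module.finrank F C₄ = k₄)
    (hd₁ : minDist C₁ = d₁) (hd₃ : minDist C₃ = d₃)
    (hd₂ : minDist (dualCode C₂) = d₂') (hd₄ : minDist (dualCode C₄) = d₄') :
    uuvCode C₂ C₄ ≤ uuvCode C₁ C₃ ∧
    Module.finrank F (uuvCode C₁ C₃) - Module.finrank F (uuvCode C₂ C₄)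
      = (k₁ + k₃) - (k₂ + k₄) ∧
    (∀ x ∈ uuvCode C₁ C₃, x ≠ 0 → min (2 * d₁) d₃ ≤ hammingNorm x) ∧
    (∀ y ∈ dualCode (uuvCode C₂ C₄), y ≠ 0 → min (2 * d₄') d₂' ≤ hammingNorm y) := by
  subst hk₁ hk₂ hk₃ hk₄ hd₁ hd₃ hd₂ hd₄
  refine ⟨uuvCode_mono h12 h34, by rw [finrank_uuvCode, finrank_uuvCode], ?_, ?_⟩
  · rintro x ⟨u, hu, v, hv, rfl⟩ hx
    rw [hammingNorm_sum_elim]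
    refine min_le_hammingNorm_add_hammingNorm_add hu hv ?_
    contrapose! hx
    simp [hx.1, hx.2]
  · intro y hy hy0
    obtain ⟨t, ht, s, hs, rfl⟩ := exists_eq_of_mem_dualCode_uuvCode hy
    rw [hammingNorm_sum_elim, hammingNorm_neg, add_comm]
    refine min_le_hammingNorm_add_hammingNorm_add ht hs ?_
    contrapose! hy0
    simp [hy0.1, hy0.2]

/-- classical data of the `(u|u+v)` theorem: for nested codes
`C₂ ⊆ C₁` and `C₄ ⊆ C₃` in `F_q^n`: (i) `(C₂|C₂+C₄) ⊆ (C₁|C₁+C₃)`; (ii) the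
dimension difference is `(k₁+k₃) - (k₂+k₄)`; (iii) nonzero codewords of
`(C₁|C₁+C₃)` have weight `≥ min (2 d₁) d₃`; (iv) nonzero codewords of
`(C₂|C₂+C₄)^⊥` have weight `≥ min (2 d₄') d₂'`. -/
theorem uuv_CSS_data {F : Type*} [Field F] [DecidableEq F] {n : ℕ}
    (C₁ C₂ C₃ C₄ : Submodule F (Fin n → F)) (h12 : C₂ ≤ C₁) (h34 : C₄ ≤ C₃)
    (k₁ k₂ k₃ k₄ d₁ d₃ d₂' d₄' : ℕ) (hkk : k₂ ≤ k₁) (hkk' : k₄ ≤ k₃)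
    (hk₁ : Module.finrank F C₁ = k₁) (hk₂ : Module.finrank F C₂ = k₂)
    (hk₃ : Module.finrank F C₃ = k₃) (hk₄ : Module.finrank F C₄ = k₄)
    (hd₁ : minDist C₁ = d₁) (hd₃ : minDist C₃ = d₃)
    (hd₂ : minDist (dualCode C₂) = d₂') (hd₄ : minDist (dualCode C₄) = d₄') :
    uuvCode C₂ C₄ ≤ uuvCode C₁ C₃ ∧
    Module.finrank F (uuvCode C₁ C₃) - Module.finrank F (uuvCode C₂ C₄)
      = (k₁ + k₃) - (k₂ + k₄) ∧
    (∀ x ∈ uuvCode C₁ C₃, x ≠ 0 → min (2 * d₁) d₃ ≤ hammingNorm x) ∧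
    (∀ y ∈ dualCode (uuvCode C₂ C₄), y ≠ 0 → min (2 * d₄') d₂' ≤ hammingNorm y) :=
  uuv_CSS_data_general C₁ C₂ C₃ C₄ h12 h34 k₁ k₂ k₃ k₄ d₁ d₃ d₂' d₄' hk₁ hk₂ hk₃ hk₄ hd₁ hd₃ hd₂ hd₄
end
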